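/- Let κ_1 < κ_2 < … < κ_m be finitely many regular uncountable cardinals, let ν < κ_1 be an infinite regular cardinal, and for each l let S_l ⊆ κ_l be stationary in κ_l with cf(α) ≤ ν for every α ∈ S_l. Then the family (S_l : l ≤ m) is mutually stationary: for every countable family 𝓕 of finitary functions on κ_m there exists X ⊆ κ_m closed under all functions in 𝓕 such that sup(X ∩ κ_l) ∈ S_l for each l with κ_l ∈ X (equivalently, for each l ≤ m after arranging κ_l ∈ X). -/

import Mathlib

open Ordinal Set Cardinal

/-- A finitary function (with arity) maps tuples below `lam` to ordinals below `lam`. -/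
def FinFunOn (lam : Ordinal) (p : Σ n : ℕ, (Fin n → Ordinal) → Ordinal) : Prop :=
  ∀ v : Fin p.1 → Ordinal, (∀ i, v i < lam) → p.2 v < lam

/-- `X` is closed under the finitary function `p`. -/
def ClosedUnderFun (X : Set Ordinal) (p : Σ n : ℕ, (Fin n → Ordinal) → Ordinal) : Prop :=
  ∀ v : Fin p.1 → Ordinal, (∀ i, v i ∈ X) → p.2 v ∈ X

/-- `κ` is a regular uncountable cardinal (viewed as an ordinal). -/
def IsRegularUncountableOrd (κ : Ordinal) : Prop :=
  κ.cof.ord = κ ∧ Ordinal.omega0 < κ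

/-- `C` is a closed unbounded subset of `κ`. -/
def ClubIn (C : Set Ordinal) (κ : Ordinal) : Prop :=
  C ⊆ Set.Iio κ ∧ (∀ α < κ, ∃ β ∈ C, α ≤ β) ∧
    ∀ α < κ, (C ∩ Set.Iio α).Nonempty → sSup (C ∩ Set.Iio α) = α → α ∈ C

/-- `S` is stationary in `κ`: it meets every club subset of `κ`. -/
def StationaryIn (S : Set Ordinal) (κ : Ordinal) : Prop :=
  ∀ C, ClubIn C κ → (S ∩ C).Nonempty

/-- Mutual stationarity of the family `S` indexed by the set `A` of regular
uncountable cardinals: for every countable family of finitary functions on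
`λ = sSup A` there is `X ⊆ λ` closed under all of them with
`sSup (X ∩ κ) ∈ S κ` for every `κ ∈ X ∩ A`. -/
def MutuallyStationary (A : Set Ordinal) (S : Ordinal → Set Ordinal) : Prop :=
  ∀ F : ℕ → Σ n : ℕ, (Fin n → Ordinal) → Ordinal,
    (∀ k, FinFunOn (sSup A) (F k)) →
    ∃ X : Set Ordinal, X ⊆ Set.Iio (sSup A) ∧ (∀ k, ClosedUnderFun X (F k)) ∧
      ∀ κ ∈ X ∩ A, sSup (X ∩ Set.Iio κ) ∈ S κ


namespace MSAux
universe u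
variable (F : ℕ → Σ n : ℕ, (Fin n → Ordinal.{u}) → Ordinal.{u})

def step (Y : Set Ordinal) : Set Ordinal :=
  Y ∪ ⋃ k : ℕ, Set.range fun v : {v : Fin (F k).1 → Ordinal // ∀ i, v i ∈ Y} => (F k).2 v.1

def stage (Y : Set Ordinal) : ℕ → Set Ordinal
  | 0 => Y
  | n + 1 => step F (stage Y n)

def hull (Y : Set Ordinal) : Set Ordinal := ⋃ n, stage F Y n

theorem stage_mono_succ (Y : Set Ordinal) (n : ℕ) : stage F Y n ⊆ stage F Y (n + 1) :=
  subset_union_left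

theorem stage_mono (Y : Set Ordinal) {a b : ℕ} (h : a ≤ b) : stage F Y a ⊆ stage F Y b := by
  induction h with
  | refl => exact subset_rfl
  | step _ ih => exact ih.trans (stage_mono_succ F Y _)

theorem subset_hull (Y : Set Ordinal) : Y ⊆ hull F Y :=
  subset_iUnion (stage F Y) 0

theorem hull_closed (Y : Set Ordinal) (k : ℕ) : ClosedUnderFun (hull F Y) (F k) := by
  intro v hv
  have h : ∀ i, ∃ n, v i ∈ stage F Y n := fun i => mem_iUnion.1 (hv i)
  choose n hn using h
  set N := Finset.univ.sup n with hN
  have hvN : ∀ i, v i ∈ stage F Y N :=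
    fun i => stage_mono F Y (Finset.le_sup (Finset.mem_univ i)) (hn i)
  have : (F k).2 v ∈ stage F Y (N + 1) := by
    refine subset_union_right ?_
    exact mem_iUnion.2 ⟨k, ⟨⟨v, hvN⟩, rfl⟩⟩
  exact mem_iUnion.2 ⟨N + 1, this⟩

theorem hull_least {Y Z : Set Ordinal} (hYZ : Y ⊆ Z) (hZ : ∀ k, ClosedUnderFun Z (F k)) :
    hull F Y ⊆ Z := by
  refine iUnion_subset fun n => ?_
  induction n with
  | zero => exact hYZ
  | succ n ih =>
    refine union_subset ih (iUnion_subset fun k => ?_)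
    rintro x ⟨⟨v, hv⟩, rfl⟩
    exact hZ k v fun i => ih (hv i)

theorem hull_mono {Y Z : Set Ordinal} (h : Y ⊆ Z) : hull F Y ⊆ hull F Z :=
  hull_least F (h.trans (subset_hull F Z)) (hull_closed F Z)

theorem hull_subset_Iio {lam : Ordinal} {Y : Set Ordinal} (h1 : ∀ k, FinFunOn lam (F k))
    (h2 : Y ⊆ Iio lam) : hull F Y ⊆ Iio lam :=
  hull_least F h2 fun k v hv => h1 k v hv

/-- continuity along a monotone `ℕ`-chain -/
theorem hull_chain_subset {T : Set Ordinal} {g : ℕ → Ordinal} (hg : Monotone g) :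
    hull F (Iio (⨆ n, g n) ∪ T) ⊆ ⋃ n, hull F (Iio (g n) ∪ T) := by
  refine hull_least F ?_ ?_
  · rintro x (hx | hx)
    · obtain ⟨n, hn⟩ := (Ordinal.lt_iSup_iff).1 hx
      exact mem_iUnion.2 ⟨n, subset_hull F _ (Or.inl hn)⟩
    · exact mem_iUnion.2 ⟨0, subset_hull F _ (Or.inr hx)⟩
  · intro k v hv
    have h : ∀ i, ∃ n, v i ∈ hull F (Iio (g n) ∪ T) := fun i => mem_iUnion.1 (hv i)
    choose n hn using h
    set N := Finset.univ.sup n with hN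
    have hvN : ∀ i, v i ∈ hull F (Iio (g N) ∪ T) := fun i =>
      hull_mono F (union_subset_union_left T fun x hx =>
        lt_of_lt_of_le hx (hg (Finset.le_sup (Finset.mem_univ i)))) (hn i)
    exact mem_iUnion.2 ⟨N, hull_closed F _ k v hvN⟩

/-- continuity along an arbitrary nonempty set of ordinals -/
theorem hull_bUnion_subset {T : Set Ordinal} {E : Set Ordinal} (hE : E.Nonempty) :
    hull F ((⋃ δ ∈ E, Iio δ) ∪ T) ⊆ ⋃ δ ∈ E, hull F (Iio δ ∪ T) := by
  obtain ⟨δ₀, hδ₀⟩ := hE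
  refine hull_least F ?_ ?_
  · rintro x (hx | hx)
    · obtain ⟨δ, hδE, hδ⟩ := mem_iUnion₂.1 hx
      exact mem_iUnion₂.2 ⟨δ, hδE, subset_hull F _ (Or.inl hδ)⟩
    · exact mem_iUnion₂.2 ⟨δ₀, hδ₀, subset_hull F _ (Or.inr hx)⟩
  · intro k v hv
    have h : ∀ i, ∃ δ, δ ∈ E ∧ v i ∈ hull F (Iio δ ∪ T) := by
      intro i; obtain ⟨δ, hδE, hδ⟩ := mem_iUnion₂.1 (hv i)
      exact ⟨δ, hδE, hδ⟩
    choose d hdE hd using h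
    rcases isEmpty_or_nonempty (Fin (F k).1) with he | he
    · exact mem_iUnion₂.2 ⟨δ₀, hδ₀, hull_closed F _ k v fun i => (he.false i).elim⟩
    · obtain ⟨i₀, hi₀⟩ := Finite.exists_max d
      have hvd : ∀ i, v i ∈ hull F (Iio (d i₀) ∪ T) := by
        intro i
        exact hull_mono F (union_subset_union_left T fun x hx =>
          lt_of_lt_of_le hx (hi₀ i)) (hd i)
      exact mem_iUnion₂.2 ⟨d i₀, hdE i₀, hull_closed F _ k v hvd⟩

theorem mk_iUnion_le_of {ι : Type} [Countable ι] {s : ι → Set Ordinal.{u}} {a : Cardinal.{u+1}}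
    (ha : ℵ₀ ≤ a) (h : ∀ i, #(s i) ≤ a) : #(⋃ i, s i) ≤ a := by
  rcases isEmpty_or_nonempty ι with hι | hι
  · simp [iUnion_of_empty]
  have h1 := mk_iUnion_le_lift (α := Ordinal) (ι := ι) s
  rw [Cardinal.lift_id'] at h1
  have h2 : Cardinal.lift.{u+1} #ι * ⨆ i, Cardinal.lift.{0} #(s i) ≤ ℵ₀ * a := by
    refine mul_le_mul' ?_ ?_
    · rw [← Cardinal.lift_aleph0.{u+1,0}]
      exact Cardinal.lift_le.2 (Cardinal.mk_le_aleph0)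
    · exact ciSup_le' fun i => by rw [Cardinal.lift_id']; exact h i
  refine h1.trans (h2.trans ?_)
  rw [Cardinal.mul_eq_max (le_refl ℵ₀) ha, max_eq_right ha]

theorem mk_stage_le (Y : Set Ordinal) (n : ℕ) : #(stage F Y n) ≤ max #Y ℵ₀ := by
  set a := max #Y ℵ₀ with hadef
  have ha : ℵ₀ ≤ a := le_max_right _ _
  induction n with
  | zero => exact le_max_left _ _
  | succ n ih =>
    show #((stage F Y n) ∪ ⋃ k : ℕ, Set.range fun v : {v : Fin (F k).1 → Ordinal // ∀ i, v i ∈ stage F Y n} => (F k).2 v.1 : Set Ordinal) ≤ a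
    refine (mk_union_le _ _).trans ?_
    have hU : #(⋃ k : ℕ, Set.range fun v : {v : Fin (F k).1 → Ordinal // ∀ i, v i ∈ stage F Y n} => (F k).2 v.1 : Set Ordinal) ≤ a := by
      refine mk_iUnion_le_of (ι := ℕ) (s := fun k => Set.range fun v : {v : Fin (F k).1 → Ordinal // ∀ i, v i ∈ stage F Y n} => (F k).2 v.1) ha fun k => ?_
      refine (mk_range_le).trans ?_
      have e : {v : Fin (F k).1 → Ordinal // ∀ i, v i ∈ stage F Y n} ≃
          (Fin (F k).1 → (stage F Y n : Set Ordinal)) := Equiv.subtypePiEquivPi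
      rw [mk_congr e, Cardinal.mk_arrow]
      have : Cardinal.lift.{0} #(stage F Y n) ^ Cardinal.lift.{u+1} #(Fin (F k).1) ≤
          a ^ ((F k).1 : Cardinal.{u+1}) := by
        rw [Cardinal.lift_id', Cardinal.mk_fin, Cardinal.lift_natCast]
        exact power_le_power_right ih
      refine this.trans ?_
      rw [Cardinal.power_natCast]
      exact power_nat_le ha
    calc #(stage F Y n) + _ ≤ a + a := add_le_add ih hU
    _ = a := Cardinal.add_eq_self ha

theorem mk_hull_le (Y : Set Ordinal) : #(hull F Y) ≤ max #Y ℵ₀ := by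
  rw [show hull F Y = ⋃ n, stage F Y n from rfl]
  exact mk_iUnion_le_of (ι := ℕ) (s := stage F Y) (le_max_right _ _) (mk_stage_le F Y)

theorem exists_bound {c : Cardinal.{u}} (hc : c.ord.cof = c) {A : Set Ordinal.{u}}
    (hA : A ⊆ Iio c.ord) (hcard : #A < Cardinal.lift.{u+1} c) :
    ∃ b, b < c.ord ∧ ∀ x ∈ A, x ≤ b := by
  have hsmall : Small.{u} A :=
    Ordinal.bddAbove_iff_small.1 ⟨c.ord, fun x hx => (hA hx).le⟩
  set f : Shrink.{u} ↥A → Ordinal.{u} := fun i => ((equivShrink ↥A).symm i : Ordinal) with hf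
  have hci : #(Shrink.{u} ↥A) < c.ord.cof := by
    rw [hc, ← Cardinal.lift_lt.{u, u+1}, Cardinal.lift_mk_shrink'' ↥A]
    exact hcard
  have hb : (⨆ i, f i) < c.ord :=
    Ordinal.iSup_lt_ord hci fun i => hA (Subtype.mem _)
  refine ⟨⨆ i, f i, hb, fun x hx => ?_⟩
  have hx' : x = f (equivShrink ↥A ⟨x, hx⟩) := by simp [hf]
  rw [hx']
  exact le_ciSup Ordinal.bddAbove_of_small _

theorem clubIn_good {c : Cardinal.{u}} (hc : c.ord.cof = c) (hℵ : ℵ₀ < c)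
    {T : Set Ordinal.{u}} (hT : #T < Cardinal.lift.{u+1} c) {b0 : Ordinal.{u}} (hb0 : b0 < c.ord) :
    ClubIn {γ | b0 < γ ∧ Order.IsSuccLimit γ ∧ γ < c.ord ∧
      hull F (Iio γ ∪ T) ∩ Iio c.ord ⊆ Iio γ} c.ord := by
  set C := {γ | b0 < γ ∧ Order.IsSuccLimit γ ∧ γ < c.ord ∧
      hull F (Iio γ ∪ T) ∩ Iio c.ord ⊆ Iio γ} with hC
  have hℵlift : ℵ₀ < Cardinal.lift.{u+1} c := by
    rw [← Cardinal.lift_aleph0.{u+1,u}]; exact Cardinal.lift_lt.2 hℵ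
  have hord_lim : Order.IsSuccLimit (c.ord) := Cardinal.isSuccLimit_ord hℵ.le
  have hB : ∀ δ : Ordinal.{u}, ∃ b, b < c.ord ∧
      (δ < c.ord → ∀ x ∈ hull F (Iio δ ∪ T) ∩ Iio c.ord, x ≤ b) := by
    intro δ
    by_cases h : δ < c.ord
    · have hcard : #(hull F (Iio δ ∪ T) ∩ Iio c.ord : Set Ordinal) < Cardinal.lift.{u+1} c := by
        refine lt_of_le_of_lt (mk_le_mk_of_subset inter_subset_left) ?_
        refine lt_of_le_of_lt (mk_hull_le F _) (max_lt ?_ hℵlift)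
        refine lt_of_le_of_lt (mk_union_le _ _) ?_
        refine Cardinal.add_lt_of_lt hℵlift.le ?_ hT
        rw [Ordinal.mk_Iio_ordinal]
        exact Cardinal.lift_lt.2 (Cardinal.lt_ord.1 h)
      obtain ⟨b, hb1, hb2⟩ := exists_bound hc (inter_subset_right) hcard
      exact ⟨b, hb1, fun _ => hb2⟩
    · exact ⟨0, hord_lim.pos, fun h' => absurd h' h⟩
  choose B hB1 hB2 using hB
  refine ⟨fun γ hγ => hγ.2.2.1, ?_, ?_⟩
  · -- unbounded
    intro ξ hξ
    set g : ℕ → Ordinal.{u} :=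
      fun n => Nat.rec (Order.succ (max ξ b0)) (fun _ δ => Order.succ (max δ (B δ))) n with hg
    have hgs : ∀ n, g (n + 1) = Order.succ (max (g n) (B (g n))) := fun n => rfl
    have hglt : ∀ n, g n < c.ord := by
      intro n
      induction n with
      | zero => exact hord_lim.succ_lt (max_lt hξ hb0)
      | succ n ih => exact hord_lim.succ_lt (max_lt ih (hB1 (g n)))
    have hmono_succ : ∀ n, g n < g (n + 1) := fun n =>
      Order.lt_succ_of_le (le_max_left _ _)
    have hmono : Monotone g := monotone_nat_of_le_succ fun n => (hmono_succ n).le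
    set γ := ⨆ n, g n with hγdef
    have hγ : γ < c.ord := by
      refine Ordinal.iSup_lt_ord_lift ?_ hglt
      rw [Cardinal.mk_nat, Cardinal.lift_aleph0, hc]
      exact hℵ
    have hle : ∀ n, g n ≤ γ := fun n => le_ciSup Ordinal.bddAbove_of_small n
    have hltγ : ∀ n, g n < γ := fun n => (hmono_succ n).trans_le (hle (n + 1))
    have hγlim : Order.IsSuccLimit γ := by
      rw [Ordinal.isSuccLimit_iff]
      constructor
      · exact (lt_of_lt_of_le (Order.lt_succ_of_le zero_le) (hle 0)).ne'
      · apply Order.isSuccPrelimit_of_succ_lt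
        intro a ha
        obtain ⟨n, hn⟩ := (Ordinal.lt_iSup_iff).1 ha
        exact lt_of_le_of_lt (Order.succ_le_of_lt hn) (hltγ n)
    refine ⟨γ, ⟨lt_of_lt_of_le (Order.lt_succ_of_le (le_max_right _ _)) (hle 0), hγlim, hγ, ?_⟩,
      le_trans (Order.lt_succ_of_le (le_max_left _ _)).le (hle 0)⟩
    intro x hx
    obtain ⟨n, hn⟩ := mem_iUnion.1 (hull_chain_subset F hmono hx.1)
    have hx1 : x ≤ B (g n) := hB2 (g n) (hglt n) x ⟨hn, hx.2⟩
    have hx2 : x < g (n + 1) := by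
      rw [hgs n]; exact Order.lt_succ_of_le (hx1.trans (le_max_right _ _))
    exact hx2.trans (hltγ (n + 1))
  · -- closed
    intro α hα hne hsup
    have hE : ∀ x < α, ∃ δ ∈ C ∩ Iio α, x < δ := by
      intro x hx
      by_contra h
      push_neg at h
      have : sSup (C ∩ Iio α) ≤ x := csSup_le hne h
      rw [hsup] at this
      exact absurd hx (not_lt.2 this)
    obtain ⟨δ1, hδ1⟩ := hne
    refine ⟨lt_trans hδ1.1.1 hδ1.2, Ordinal.isSuccLimit_iff.2 ⟨?_, Order.isSuccPrelimit_of_succ_lt ?_⟩, hα, ?_⟩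
    · exact (lt_of_le_of_lt (zero_le (a := δ1)) hδ1.2).ne'
    · intro a ha
      obtain ⟨δ, hδ, hlt⟩ := hE a ha
      exact lt_trans (hδ.1.2.1.succ_lt hlt) hδ.2
    · have h1 : Iio α ⊆ ⋃ δ ∈ C ∩ Iio α, Iio δ := by
        intro x hx
        obtain ⟨δ, hδ, h⟩ := hE x hx
        exact mem_iUnion₂.2 ⟨δ, hδ, h⟩
      have h2 : hull F (Iio α ∪ T) ⊆ ⋃ δ ∈ C ∩ Iio α, hull F (Iio δ ∪ T) :=
        subset_trans (hull_mono F (union_subset_union_left T h1))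
          (hull_bUnion_subset F ⟨δ1, hδ1⟩)
      intro x hx
      obtain ⟨δ, hδ, hxδ⟩ := mem_iUnion₂.1 (h2 hx.1)
      exact lt_trans (hδ.1.2.2.2 ⟨hxδ, hx.2⟩) (mem_Iio.1 hδ.2)

theorem exists_cofinal {α : Ordinal.{u}} (hlim : Order.IsSuccLimit α) :
    ∃ T : Set Ordinal.{u}, T ⊆ Iio α ∧ (∀ x < α, ∃ t ∈ T, x ≤ t) ∧
      Cardinal.mk T ≤ Cardinal.lift.{u+1} α.cof := by
  obtain ⟨ι, f, hf, hι⟩ := Ordinal.exists_lsub_cof α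
  refine ⟨Set.range f, ?_, ?_, ?_⟩
  · rintro x ⟨i, rfl⟩
    rw [← hf]
    exact Ordinal.lt_lsub f i
  · intro x hx
    rw [← hf] at hx
    obtain ⟨i, hi⟩ := Ordinal.lt_lsub_iff.1 hx
    exact ⟨f i, ⟨i, rfl⟩, hi⟩
  · have h1 := Cardinal.mk_range_le_lift.{u, u+1} (f := f)
    rw [Cardinal.lift_id'.{u, u+1}] at h1
    rw [← hι]
    exact h1

theorem sSup_eq_of {α : Ordinal.{u}} (hlim : Order.IsSuccLimit α) {X : Set Ordinal.{u}}
    (hub : X ⊆ Iio α) (hcof : ∀ x < α, ∃ t ∈ X, x ≤ t) : sSup X = α := by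
  have hne : X.Nonempty := by
    obtain ⟨t, ht, -⟩ := hcof 0 hlim.pos
    exact ⟨t, ht⟩
  have hbdd : BddAbove X := ⟨α, fun x hx => (hub hx).le⟩
  refine le_antisymm (csSup_le hne fun x hx => (hub hx).le) ?_
  by_contra h
  push_neg at h
  obtain ⟨t, ht, hle⟩ := hcof (Order.succ (sSup X)) (hlim.succ_lt h)
  exact absurd (le_csSup hbdd ht) (not_le.2 ((Order.lt_succ_of_le le_rfl).trans_le hle))

end MSAux

namespace MSAux
universe u

theorem main {m : ℕ} (κ : Fin (m + 1) → Ordinal.{u})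
    (hmono : StrictMono κ)
    (hreg : ∀ l, IsRegularUncountableOrd (κ l))
    (ν : Cardinal.{u}) (hνreg : ν.IsRegular) (hνlt : ν.ord < κ 0)
    (S : Fin (m + 1) → Set Ordinal)
    (hsub : ∀ l, S l ⊆ Set.Iio (κ l))
    (hstat : ∀ l, StationaryIn (S l) (κ l))
    (hcof : ∀ l, ∀ α ∈ S l, α.cof ≤ ν)
    (F : ℕ → Σ n : ℕ, (Fin n → Ordinal.{u}) → Ordinal.{u})
    (hFF : ∀ k, FinFunOn (κ (Fin.last m)) (F k)) :
    ∃ X : Set Ordinal, X ⊆ Set.Iio (κ (Fin.last m)) ∧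
      (∀ k, ClosedUnderFun X (F k)) ∧
      ∀ l, κ l ∈ X → sSup (X ∩ Set.Iio (κ l)) ∈ S l := by
  have hco : ∀ l, ((κ l).cof).ord = κ l := fun l => (hreg l).1
  have hℵ : ∀ l, ℵ₀ < (κ l).cof := by
    intro l
    have h := (hreg l).2
    rw [← Cardinal.ord_aleph0, ← hco l] at h
    exact (Cardinal.ord_lt_ord).1 h
  have hν : ∀ l, ν < (κ l).cof := by
    intro l
    have h : ν.ord < (κ l).cof.ord := by
      rw [hco l]
      exact lt_of_lt_of_le hνlt (hmono.monotone (Fin.zero_le l))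
    exact (Cardinal.ord_lt_ord).1 h
  have hνℵ : ℵ₀ ≤ Cardinal.lift.{u+1} ν := by
    rw [← Cardinal.lift_aleph0.{u+1,u}]
    exact Cardinal.lift_le.2 hνreg.1
  -- the downward recursion
  have key : ∀ k : ℕ, ∃ (α : Fin (m+1) → Ordinal.{u}) (T : Fin (m+1) → Set Ordinal.{u}),
      (∀ l : Fin (m+1), ¬(m - k ≤ (l:ℕ) ∧ (l:ℕ) < m) → T l = ∅) ∧
      (∀ l : Fin (m+1), m - k ≤ (l:ℕ) → (l:ℕ) < m →
        (α l ∈ S l ∧ Order.IsSuccLimit (α l) ∧ (∀ l', l' < l → κ l' < α l) ∧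
         T l ⊆ Iio (α l) ∧ (∀ x < α l, ∃ t ∈ T l, x ≤ t) ∧
         #(T l) ≤ Cardinal.lift.{u+1} ν ∧
         hull F (Iio (α l) ∪ ⋃ l' ∈ Set.Ioi l, T l') ∩ Iio (κ l) ⊆ Iio (α l))) := by
    intro k
    induction k with
    | zero =>
      exact ⟨fun _ => 0, fun _ => ∅, fun _ _ => rfl, fun l h1 h2 => absurd h2 (by omega)⟩
    | succ k ih =>
      obtain ⟨α, T, hemp, hGood⟩ := ih
      by_cases hk : m - (k+1) = m - k
      · rw [hk]
        exact ⟨α, T, hemp, hGood⟩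
      · have hj : m - (k+1) + 1 = m - k := by omega
        set j := m - (k+1) with hjdef
        have hjm : j < m := by omega
        set l₀ : Fin (m+1) := ⟨j, by omega⟩ with hl₀
        have hval : (l₀:ℕ) = j := rfl
        -- the union of higher cofinal sets
        set TT := ⋃ l' ∈ Set.Ioi l₀, T l' with hTT
        have hTl : ∀ l', #(T l') ≤ Cardinal.lift.{u+1} ν := by
          intro l'
          by_cases h : m - k ≤ (l':ℕ) ∧ (l':ℕ) < m
          · exact (hGood l' h.1 h.2).2.2.2.2.2.1
          · rw [hemp l' h]
            simp
        have hTTcard : #TT < Cardinal.lift.{u+1} ((κ l₀).cof) := by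
          have h1 : TT ⊆ ⋃ l', T l' := iUnion₂_subset fun l' _ => subset_iUnion T l'
          have h2 : #TT ≤ Cardinal.lift.{u+1} ν :=
            (mk_le_mk_of_subset h1).trans (mk_iUnion_le_of (ι := Fin (m+1)) hνℵ hTl)
          exact lt_of_le_of_lt h2 (Cardinal.lift_lt.2 (hν l₀))
        -- lower bound
        set b0 : Ordinal.{u} := if h0 : j = 0 then 0 else κ ⟨j-1, by omega⟩ with hb0def
        have hb0 : b0 < ((κ l₀).cof).ord := by
          rw [hco l₀, hb0def]
          split
          · rw [← hco l₀]
            exact (Cardinal.isSuccLimit_ord (hℵ l₀).le).pos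
          · exact hmono (by rw [Fin.lt_def]; simp; omega)
        have hcc : ((κ l₀).cof).ord.cof = (κ l₀).cof := by rw [hco l₀]
        have hclub := clubIn_good F hcc (hℵ l₀) hTTcard hb0
        rw [hco l₀] at hclub
        obtain ⟨α₀, hα₀S, hα₀C⟩ := hstat l₀ _ hclub
        simp only [mem_setOf_eq, hco l₀] at hα₀C
        obtain ⟨hα₀b, hα₀lim, hα₀κ, hα₀hull⟩ := hα₀C
        obtain ⟨T₀, hT₀sub, hT₀cof, hT₀card⟩ := exists_cofinal hα₀lim
        have hT₀card' : #T₀ ≤ Cardinal.lift.{u+1} ν :=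
          hT₀card.trans (Cardinal.lift_le.2 (hcof l₀ α₀ hα₀S))
        refine ⟨Function.update α l₀ α₀, Function.update T l₀ T₀, ?_, ?_⟩
        · intro l hl
          have hne : l ≠ l₀ := by
            intro h
            rw [h] at hl
            exact hl ⟨by omega, by omega⟩
          rw [Function.update_of_ne hne]
          exact hemp l (by omega)
        · intro l hl1 hl2
          rcases eq_or_ne l l₀ with rfl | hne
          · rw [Function.update_self]
            have hbig : (⋃ l' ∈ Set.Ioi l₀, Function.update T l₀ T₀ l') = TT := by
              refine iUnion₂_congr fun l' hl' => ?_
              exact Function.update_of_ne (ne_of_gt hl') _ _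
            refine ⟨hα₀S, hα₀lim, ?_, ?_, ?_, ?_, ?_⟩
            · intro l' hl'
              have hl'j : (l':ℕ) < j := hl'
              have h0 : j ≠ 0 := by omega
              have : κ l' ≤ b0 := by
                rw [hb0def]
                rw [dif_neg h0]
                exact hmono.monotone (by rw [Fin.le_def]; simp; omega)
              exact lt_of_le_of_lt this hα₀b
            · rw [Function.update_self]; exact hT₀sub
            · rw [Function.update_self]; exact hT₀cof
            · rw [Function.update_self]; exact hT₀card'
            · rw [hbig]; exact hα₀hull
          · have hlγ : l₀ < l := by
              rw [Fin.lt_def]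
              have h1 : (l:ℕ) ≠ j := fun h => hne (Fin.ext h)
              simp [hl₀]
              omega
            have hrange : m - k ≤ (l:ℕ) := by
              have := hlγ
              rw [Fin.lt_def] at this
              simp [hl₀] at this
              omega
            obtain ⟨g1, g2, g3, g4, g5, g6, g7⟩ := hGood l hrange hl2
            rw [Function.update_of_ne hne, Function.update_of_ne hne]
            refine ⟨g1, g2, g3, g4, g5, g6, ?_⟩
            have hbig : (⋃ l' ∈ Set.Ioi l, Function.update T l₀ T₀ l') =
                ⋃ l' ∈ Set.Ioi l, T l' := by
              refine iUnion₂_congr fun l' hl' => ?_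
              exact Function.update_of_ne (ne_of_gt (lt_trans hlγ hl')) _ _
            rw [hbig]
            exact g7
  -- finish
  obtain ⟨α, T, hemp, hGood⟩ := key m
  have hGood' : ∀ l : Fin (m+1), (l:ℕ) < m →
      (α l ∈ S l ∧ Order.IsSuccLimit (α l) ∧ (∀ l', l' < l → κ l' < α l) ∧
       T l ⊆ Iio (α l) ∧ (∀ x < α l, ∃ t ∈ T l, x ≤ t) ∧
       #(T l) ≤ Cardinal.lift.{u+1} ν ∧
       hull F (Iio (α l) ∪ ⋃ l' ∈ Set.Ioi l, T l') ∩ Iio (κ l) ⊆ Iio (α l)) :=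
    fun l h => hGood l (by omega) h
  set X := hull F (⋃ l', T l') with hX
  have hTsubκ : ∀ l', T l' ⊆ Iio (κ (Fin.last m)) := by
    intro l'
    by_cases h : (l':ℕ) < m
    · intro x hx
      have h1 := (hGood' l' h).2.2.2.1 hx
      have h2 := hsub l' ((hGood' l' h).1)
      exact lt_trans (lt_trans h1 h2) (hmono (by rw [Fin.lt_def]; simp [Fin.last]; omega))
    · rw [hemp l' (by omega)]
      exact empty_subset _
  have hXsub : X ⊆ Iio (κ (Fin.last m)) :=
    hull_subset_Iio F hFF (iUnion_subset hTsubκ)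
  refine ⟨X, hXsub, fun k => hull_closed F _ k, ?_⟩
  intro l hl
  have hlm : (l:ℕ) < m := by
    by_contra h
    have hlast : l = Fin.last m := by
      apply Fin.ext
      simp [Fin.last]
      omega
    rw [hlast] at hl
    exact lt_irrefl _ (mem_Iio.1 (hXsub hl))
  obtain ⟨g1, g2, g3, g4, g5, g6, g7⟩ := hGood' l hlm
  have hseed : (⋃ l', T l') ⊆ Iio (α l) ∪ ⋃ l' ∈ Set.Ioi l, T l' := by
    refine iUnion_subset fun l' => ?_
    rcases lt_trichotomy l' l with h | h | h
    · intro x hx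
      left
      have hl'm : (l':ℕ) < m := by
        rw [Fin.lt_def] at h
        omega
      obtain ⟨f1, -, -, f4, -⟩ := hGood' l' hl'm
      exact lt_trans (lt_trans (f4 hx) (hsub l' f1)) (g3 l' h)
    · rw [h]
      exact fun x hx => Or.inl (g4 hx)
    · exact fun x hx => Or.inr (mem_iUnion₂.2 ⟨l', h, hx⟩)
  have hXκ : X ∩ Iio (κ l) ⊆ Iio (α l) := by
    intro x hx
    exact g7 ⟨hull_mono F hseed hx.1, hx.2⟩
  have hsupeq : sSup (X ∩ Iio (κ l)) = α l := by
    refine sSup_eq_of g2 hXκ ?_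
    intro x hx
    obtain ⟨t, ht, hxt⟩ := g5 x hx
    refine ⟨t, ⟨subset_hull F _ (mem_iUnion.2 ⟨l, ht⟩), ?_⟩, hxt⟩
    exact lt_trans (g4 ht) (mem_Iio.1 (hsub l g1))
  rw [hsupeq]
  exact g1

end MSAux

/-- Finitely many stationary sets, each concentrating on points of cofinality
at most a regular ν below the least of the cardinals, are mutually stationary. -/
theorem finite_family_mutuallyStationary (m : ℕ) (κ : Fin (m + 1) → Ordinal)
    (hmono : StrictMono κ)
    (hreg : ∀ l, IsRegularUncountableOrd (κ l))
    (ν : Cardinal) (hνreg : ν.IsRegular) (hνlt : ν.ord < κ 0)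
    (S : Fin (m + 1) → Set Ordinal)
    (hsub : ∀ l, S l ⊆ Set.Iio (κ l))
    (hstat : ∀ l, StationaryIn (S l) (κ l))
    (hcof : ∀ l, ∀ α ∈ S l, α.cof ≤ ν) :
    ∀ F : ℕ → Σ n : ℕ, (Fin n → Ordinal) → Ordinal,
      (∀ k, FinFunOn (κ (Fin.last m)) (F k)) →
      ∃ X : Set Ordinal, X ⊆ Set.Iio (κ (Fin.last m)) ∧
        (∀ k, ClosedUnderFun X (F k)) ∧
        ∀ l, κ l ∈ X → sSup (X ∩ Set.Iio (κ l)) ∈ S l := by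
  intro F hFF
  exact MSAux.main κ hmono hreg ν hνreg hνlt S hsub hstat hcof F hFF
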